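/- arXiv:1408.2220 — 2 statements merged into one kernel-verified Lean document; each statement's English description precedes it below -/
import Mathlib

section
/- For any dimension $d \geq 1$ and any $\delta > 0$, there exists a $\delta$-bracketing cover $\Delta$ of $[0,1)^d$ with cardinality $|\Delta| \leq \frac{1}{2}(2e)^d(\delta^{-1}+1)^d$. -/
/-!
Induct on the dimension. Cut `[0,1)` in the first coordinate into `n` strips `[j/n, (j+1)/n)`
and bracket a point of the `j`-th strip by `v = (j/n, v')`, `w = ((j+1)/n, w')`, where `(v', w')`
comes from an `εⱼ`-bracketing cover of the remaining coordinates. Then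
`∏ w - ∏ v ≤ ((j+1) εⱼ + 1) / n`, so `εⱼ = c / (j+1)` with `c = nδ - 1` suffices. Taking `nδ`
just above the dimension, the number of brackets is a sum of powers `((c+j+1)/c)^k`, which is
compared with an integral; the remaining factor `(1 + 1/c)^k ≤ e` holds because `c ≥ k`.
-/

open MeasureTheory Set

/-- The anchored box `[0, v) = ∏ i, [0, v i)` in `ℝ^d`. -/
def anchoredBox {d : ℕ} (v : Fin d → ℝ) : Set (Fin d → ℝ) :=
  Set.pi Set.univ fun i => Set.Ico 0 (v i)

open Real

lemma volume_anchoredBox {d : ℕ} {v : Fin d → ℝ} (hv : 0 ≤ v) :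
    volume (anchoredBox v) = ENNReal.ofReal (∏ i, v i) := by
  rw [anchoredBox, volume_pi_pi, ENNReal.ofReal_prod_of_nonneg fun i _ => hv i]
  simp [Real.volume_Ico]

lemma volume_anchoredBox_diff {d : ℕ} {v w : Fin d → ℝ} (hv : 0 ≤ v) (hvw : v ≤ w) :
    volume (anchoredBox w \ anchoredBox v) = ENNReal.ofReal (∏ i, w i - ∏ i, v i) := by
  have hsub : anchoredBox v ⊆ anchoredBox w :=
    pi_mono fun i _ => Ico_subset_Ico le_rfl (hvw i)
  have hmeas : MeasurableSet (anchoredBox v) := .univ_pi fun _ => measurableSet_Ico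
  rw [measure_sdiff hsub hmeas.nullMeasurableSet (by simp [volume_anchoredBox hv]),
    volume_anchoredBox hv, volume_anchoredBox (hv.trans hvw),
    ENNReal.ofReal_sub _ (Finset.prod_nonneg fun i _ => hv i)]

lemma Fin.cons_mem_Icc_zero_one {k : ℕ} {a : ℝ} {f : Fin k → ℝ} :
    Fin.cons a f ∈ Icc (0 : Fin (k + 1) → ℝ) 1 ↔ a ∈ Icc 0 1 ∧ f ∈ Icc 0 1 := by
  simp only [mem_Icc, Fin.le_cons, Fin.cons_le]
  simp only [Pi.zero_apply, Pi.one_apply, Fin.tail_def]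
  tauto

lemma prod_mem_Icc_zero_one {k : ℕ} {v : Fin k → ℝ} (hv : v ∈ Icc 0 1) :
    ∏ i, v i ∈ Icc (0 : ℝ) 1 :=
  ⟨Finset.prod_nonneg fun i _ => hv.1 i, Finset.prod_le_one (fun i _ => hv.1 i) fun i _ => hv.2 i⟩

lemma exists_nat_mul_mem_Icc {a δ : ℝ} (ha : 0 < a) (hδ : 0 < δ) :
    ∃ n : ℕ, 0 < n ∧ a ≤ n * δ ∧ n * δ ≤ a + δ := by
  refine ⟨⌈a / δ⌉₊, Nat.ceil_pos.2 (div_pos ha hδ), (div_le_iff₀ hδ).1 (Nat.le_ceil _), ?_⟩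
  have := Nat.ceil_lt_add_one (div_pos ha hδ).le
  calc (⌈a / δ⌉₊ : ℝ) * δ ≤ (a / δ + 1) * δ := by gcongr
    _ = a + δ := by field_simp

lemma exists_nat_lt_div_le_le_add_one_div {n : ℕ} (hn : 0 < n) {t : ℝ} (ht : t ∈ Ico (0 : ℝ) 1) :
    ∃ j < n, (j : ℝ) / n ≤ t ∧ t ≤ (j + 1) / n := by
  have hn' : (0 : ℝ) < n := Nat.cast_pos.2 hn
  have htn : 0 ≤ t * n := mul_nonneg ht.1 hn'.le
  refine ⟨⌊t * n⌋₊, ?_, ?_, ?_⟩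
  · exact (Nat.floor_lt htn).2 (by nlinarith [ht.2])
  · exact (div_le_iff₀ hn').2 (Nat.floor_le htn)
  · exact (le_div_iff₀ hn').2 (Nat.lt_floor_add_one _).le

/-- Brackets are compared through `∏ w - ∏ v`, which is `λ([0,w) \ [0,v))` by
`volume_anchoredBox_diff`. -/
structure IsBracketingCover {d : ℕ} (δ : ℝ) (Δ : Finset ((Fin d → ℝ) × (Fin d → ℝ))) : Prop where
  mem_Icc : ∀ p ∈ Δ, p.1 ∈ Icc 0 1 ∧ p.2 ∈ Icc 0 1
  exists_bracket : ∀ x ∈ univ.pi fun _ => Ico (0 : ℝ) 1,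
    ∃ p ∈ Δ, p.1 ≤ x ∧ x ≤ p.2 ∧ ∏ i, p.2 i - ∏ i, p.1 i ≤ δ

namespace IsBracketingCover

variable {d : ℕ} {δ : ℝ} {Δ : Finset ((Fin d → ℝ) × (Fin d → ℝ))}

lemma mono {δ' : ℝ} (h : IsBracketingCover δ Δ) (hδ : δ ≤ δ') : IsBracketingCover δ' Δ where
  mem_Icc := h.mem_Icc
  exists_bracket x hx :=
    let ⟨p, hp, h₁, h₂, h₃⟩ := h.exists_bracket x hx
    ⟨p, hp, h₁, h₂, h₃.trans hδ⟩

lemma singleton_zero_one : IsBracketingCover 1 {((0 : Fin d → ℝ), 1)} where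
  mem_Icc p hp := by
    obtain rfl := Finset.mem_singleton.1 hp
    exact ⟨⟨le_rfl, zero_le_one⟩, ⟨zero_le_one, le_rfl⟩⟩
  exists_bracket x hx := by
    refine ⟨_, Finset.mem_singleton_self _, fun i => (hx i trivial).1,
      fun i => (hx i trivial).2.le, ?_⟩
    simp only [Pi.zero_apply, Pi.one_apply, Finset.prod_const_one, Finset.prod_const]
    exact sub_le_self _ (pow_nonneg le_rfl _)

lemma fin_zero : IsBracketingCover 0 {((0 : Fin 0 → ℝ), 0)} where
  mem_Icc _ _ := ⟨⟨finZeroElim, finZeroElim⟩, ⟨finZeroElim, finZeroElim⟩⟩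
  exists_bracket _ _ :=
    ⟨_, Finset.mem_singleton_self _, finZeroElim, finZeroElim, by simp⟩

end IsBracketingCover

open Classical in
noncomputable def stripCover {k : ℕ} (n : ℕ) (Δ : ℕ → Finset ((Fin k → ℝ) × (Fin k → ℝ))) :
    Finset ((Fin (k + 1) → ℝ) × (Fin (k + 1) → ℝ)) :=
  (Finset.range n).biUnion fun j =>
    (Δ j).image fun q => (Fin.cons ((j : ℝ) / n) q.1, Fin.cons (((j : ℝ) + 1) / n) q.2)

lemma card_stripCover_le {k n : ℕ} (Δ : ℕ → Finset ((Fin k → ℝ) × (Fin k → ℝ))) :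
    (stripCover n Δ).card ≤ ∑ j ∈ Finset.range n, (Δ j).card :=
  Finset.card_biUnion_le.trans (Finset.sum_le_sum fun _ _ => Finset.card_image_le)

lemma IsBracketingCover.stripCover {k n : ℕ} (hn : 0 < n) {δ : ℝ} {ε : ℕ → ℝ}
    {Δ : ℕ → Finset ((Fin k → ℝ) × (Fin k → ℝ))}
    (hΔ : ∀ j < n, IsBracketingCover (ε j) (Δ j)) (hε : ∀ j < n, ((j + 1) * ε j + 1) / n ≤ δ) :
    IsBracketingCover δ (stripCover n Δ) := by
  have hn' : (0 : ℝ) < n := Nat.cast_pos.2 hn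
  have strip_mem {j : ℕ} (hj : j < n) :
      (j : ℝ) / n ∈ Icc (0 : ℝ) 1 ∧ ((j : ℝ) + 1) / n ∈ Icc (0 : ℝ) 1 := by
    have : (j : ℝ) + 1 ≤ n := by exact_mod_cast hj
    refine ⟨⟨by positivity, (div_le_one hn').2 ?_⟩, ⟨by positivity, (div_le_one hn').2 this⟩⟩
    linarith
  constructor
  · intro p hp
    obtain ⟨j, hj, hp⟩ := Finset.mem_biUnion.1 hp
    obtain ⟨q, hq, rfl⟩ := Finset.mem_image.1 hp
    have hj := Finset.mem_range.1 hj
    exact ⟨Fin.cons_mem_Icc_zero_one.2 ⟨(strip_mem hj).1, ((hΔ j hj).mem_Icc q hq).1⟩,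
      Fin.cons_mem_Icc_zero_one.2 ⟨(strip_mem hj).2, ((hΔ j hj).mem_Icc q hq).2⟩⟩
  · intro x hx
    obtain ⟨j, hj, hjx, hxj⟩ := exists_nat_lt_div_le_le_add_one_div hn (hx 0 trivial)
    obtain ⟨q, hq, hq₁, hq₂, hgap⟩ :=
      (hΔ j hj).exists_bracket (Fin.tail x) fun i _ => hx i.succ trivial
    refine ⟨_, Finset.mem_biUnion.2 ⟨j, Finset.mem_range.2 hj, Finset.mem_image_of_mem _ hq⟩,
      Fin.cons_le (α := fun _ => ℝ) |>.2 ⟨hjx, hq₁⟩,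
      Fin.le_cons (α := fun _ => ℝ) |>.2 ⟨hxj, hq₂⟩, ?_⟩
    obtain ⟨hP₀, hP₁⟩ := prod_mem_Icc_zero_one ((hΔ j hj).mem_Icc q hq).1
    simp only [Fin.prod_cons]
    calc ((j : ℝ) + 1) / n * ∏ i, q.2 i - j / n * ∏ i, q.1 i
        = (((j : ℝ) + 1) * (∏ i, q.2 i - ∏ i, q.1 i) + ∏ i, q.1 i) / n := by ring
      _ ≤ ((j + 1) * ε j + 1) / n := by gcongr
      _ ≤ δ := hε j hj

lemma pow_add_mul_pow_le_add_one_pow {b : ℝ} (hb : 0 ≤ b) (k : ℕ) :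
    b ^ (k + 1) + (k + 1) * b ^ k ≤ (b + 1) ^ (k + 1) := by
  induction k with
  | zero => simp
  | succ k ih =>
    push_cast at ih ⊢
    calc b ^ (k + 2) + (k + 1 + 1) * b ^ (k + 1)
        ≤ b ^ (k + 2) + (k + 1 + 1) * b ^ (k + 1) + (k + 1) * b ^ k := by
          have : 0 ≤ b ^ k := pow_nonneg hb k
          have : (0 : ℝ) ≤ k := k.cast_nonneg
          nlinarith
      _ = (b + 1) * (b ^ (k + 1) + (k + 1) * b ^ k) := by ring
      _ ≤ (b + 1) * (b + 1) ^ (k + 1) := by gcongr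
      _ = (b + 1) ^ (k + 2) := by ring

lemma mul_sum_range_add_pow_le {c : ℝ} (hc : 0 ≤ c) (K n : ℕ) :
    (K + 1) * ∑ j ∈ Finset.range n, (c + j + 1) ^ K ≤ (c + n + 1) ^ (K + 1) := by
  induction n with
  | zero =>
    simp only [Finset.range_zero, Finset.sum_empty, mul_zero, Nat.cast_zero]
    positivity
  | succ n ih =>
    have := pow_add_mul_pow_le_add_one_pow (b := c + n + 1) (by positivity) K
    rw [Finset.sum_range_succ, mul_add]
    push_cast
    rw [show c + (n + 1) + 1 = c + n + 1 + 1 by ring]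
    linarith

lemma add_one_pow_le_exp_one_mul_pow {t : ℝ} {K : ℕ} (ht : 0 < t) (hK : K ≤ t) :
    (t + 1) ^ K ≤ exp 1 * t ^ K := by
  have hstep : t + 1 ≤ t * exp (1 / t) := by
    have := add_one_le_exp (1 / t)
    calc t + 1 = t * (1 / t + 1) := by field_simp; ring
      _ ≤ t * exp (1 / t) := by gcongr
  calc (t + 1) ^ K ≤ (t * exp (1 / t)) ^ K := by gcongr
    _ = exp (K / t) * t ^ K := by rw [mul_pow, ← exp_nat_mul, mul_one_div, mul_comm]
    _ ≤ exp 1 * t ^ K := by gcongr; exact (div_le_one ht).2 hK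

lemma sum_range_inv_add_one_pow_le {K n : ℕ} (hK : 0 < K) {δ : ℝ} (hδ : 0 < δ)
    (hn₁ : K + 1 ≤ n * δ) (hn₂ : n * δ ≤ K + 2) :
    ∑ j ∈ Finset.range n, (((n * δ - 1) / (j + 1))⁻¹ + 1) ^ K
      ≤ 2 * exp 1 * (δ⁻¹ + 1) ^ (K + 1) := by
  set c := (n : ℝ) * δ - 1 with hc
  have hKc : (K : ℝ) ≤ c := by linarith
  have hc₀ : 0 < c := lt_of_lt_of_le (by exact_mod_cast hK) hKc
  have hterm (j : ℕ) : ((c / (j + 1))⁻¹ + 1) ^ K = (c + j + 1) ^ K / c ^ K := by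
    rw [← div_pow]; congr 1; field_simp; ring
  have hsum := mul_sum_range_add_pow_le hc₀.le K n
  have hend : c + n + 1 = n * δ * (δ⁻¹ + 1) := by rw [hc]; field_simp; ring
  have hpow : (n * δ) ^ (K + 1) ≤ 2 * (K + 1) * exp 1 * c ^ K := by
    calc (n * δ) ^ (K + 1) = (n * δ) * (c + 1) ^ K := by rw [hc, pow_succ']; ring
      _ ≤ (K + 2) * (exp 1 * c ^ K) := by
          gcongr
          exact add_one_pow_le_exp_one_mul_pow hc₀ hKc
      _ ≤ 2 * (K + 1) * exp 1 * c ^ K := by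
          have : 0 ≤ exp 1 * c ^ K := by positivity
          nlinarith
  simp_rw [hterm, ← Finset.sum_div]
  rw [div_le_iff₀ (by positivity)]
  have hK₁ : (0 : ℝ) < K + 1 := by positivity
  refine le_of_mul_le_mul_left ?_ hK₁
  calc (K + 1) * ∑ j ∈ Finset.range n, (c + j + 1) ^ K
      ≤ (n * δ) ^ (K + 1) * (δ⁻¹ + 1) ^ (K + 1) := by rw [← mul_pow, ← hend]; exact hsum
    _ ≤ 2 * (K + 1) * exp 1 * c ^ K * (δ⁻¹ + 1) ^ (K + 1) := by gcongr
    _ = (K + 1) * (2 * exp 1 * (δ⁻¹ + 1) ^ (K + 1) * c ^ K) := by ring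

lemma exists_isBracketingCover_fin_one {δ : ℝ} (hδ : 0 < δ) :
    ∃ Δ : Finset ((Fin 1 → ℝ) × (Fin 1 → ℝ)), IsBracketingCover δ Δ ∧ (Δ.card : ℝ) ≤ δ⁻¹ + 1 := by
  obtain ⟨n, hn, hn₁, hn₂⟩ := exists_nat_mul_mem_Icc one_pos hδ
  refine ⟨stripCover n fun _ => {(0, 0)},
    IsBracketingCover.stripCover hn (ε := fun _ => 0) (fun _ _ => .fin_zero) fun _ _ => ?_, ?_⟩
  · rw [mul_zero, zero_add, div_le_iff₀ (by positivity)]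
    linarith
  · have hcard := card_stripCover_le (n := n) fun _ => {((0 : Fin 0 → ℝ), (0 : Fin 0 → ℝ))}
    simp only [Finset.card_singleton, Finset.sum_const, Finset.card_range, smul_eq_mul,
      mul_one] at hcard
    calc ((stripCover n _).card : ℝ) ≤ n := by exact_mod_cast hcard
      _ ≤ δ⁻¹ + 1 :=
        le_of_mul_le_mul_right (by rwa [add_mul, inv_mul_cancel₀ hδ.ne', one_mul]) hδ

theorem exists_isBracketingCover_card_le (D : ℕ) {δ : ℝ} (hδ : 0 < δ) :
    ∃ Δ : Finset ((Fin (D + 1) → ℝ) × (Fin (D + 1) → ℝ)),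
      IsBracketingCover δ Δ ∧ (Δ.card : ℝ) ≤ (2 * exp 1) ^ D * (δ⁻¹ + 1) ^ (D + 1) := by
  induction D generalizing δ with
  | zero => simpa using exists_isBracketingCover_fin_one hδ
  | succ D ih =>
    by_cases hδ₁ : 1 ≤ δ
    · refine ⟨_, IsBracketingCover.singleton_zero_one.mono hδ₁, ?_⟩
      rw [Finset.card_singleton, Nat.cast_one]
      exact one_le_mul_of_one_le_of_one_le (one_le_pow₀ (by linarith [add_one_le_exp (1 : ℝ)]))
        (one_le_pow₀ (by linarith [inv_pos.2 hδ]))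
    obtain ⟨n, hn, hn₁, hn₂⟩ := exists_nat_mul_mem_Icc (a := D + 2) (by positivity) hδ
    set ε : ℕ → ℝ := fun j => (n * δ - 1) / (j + 1)
    have hε (j : ℕ) : 0 < ε j := div_pos (by linarith) (by positivity)
    choose Δ hΔ hcard using fun j => ih (hε j)
    refine ⟨stripCover n Δ, IsBracketingCover.stripCover hn (fun j _ => hΔ j) fun j _ => ?_, ?_⟩
    · simp only [ε]
      rw [mul_div_cancel₀ _ (by positivity), sub_add_cancel, mul_div_cancel_left₀ _ (by positivity)]
    · calc ((stripCover n Δ).card : ℝ)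
          ≤ ∑ j ∈ Finset.range n, (2 * exp 1) ^ D * ((ε j)⁻¹ + 1) ^ (D + 1) := by
            refine (Nat.cast_le.2 (card_stripCover_le Δ)).trans ?_
            push_cast
            exact Finset.sum_le_sum fun j _ => hcard j
        _ ≤ (2 * exp 1) ^ D * (2 * exp 1 * (δ⁻¹ + 1) ^ (D + 1 + 1)) := by
            rw [← Finset.mul_sum]
            gcongr
            exact sum_range_inv_add_one_pow_le D.succ_pos hδ (by push_cast; linarith)
              (by push_cast; linarith)
        _ = (2 * exp 1) ^ (D + 1) * (δ⁻¹ + 1) ^ (D + 1 + 1) := by ring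

/-- For any dimension `d ≥ 1` and any `δ > 0` there exists a `δ`-bracketing cover `Δ`
of `[0,1)^d` with `|Δ| ≤ (1/2)(2e)^d (δ⁻¹+1)^d`. -/
theorem delta_bracketing_cover_card (d : ℕ) (hd : 1 ≤ d) (δ : ℝ) (hδ : 0 < δ) :
    ∃ Δ : Finset ((Fin d → ℝ) × (Fin d → ℝ)),
      (∀ p ∈ Δ, p.1 ∈ Set.Icc (0 : Fin d → ℝ) 1 ∧ p.2 ∈ Set.Icc (0 : Fin d → ℝ) 1) ∧
      (∀ x ∈ Set.pi Set.univ fun _ : Fin d => Set.Ico (0:ℝ) 1,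
        ∃ p ∈ Δ, p.1 ≤ x ∧ x ≤ p.2 ∧
          volume (anchoredBox p.2 \ anchoredBox p.1) ≤ ENNReal.ofReal δ) ∧
      (Δ.card : ℝ) ≤ (1/2) * (2 * Real.exp 1)^d * (δ⁻¹ + 1)^d := by
  obtain ⟨D, rfl⟩ : ∃ D, d = D + 1 := ⟨d - 1, by omega⟩
  obtain ⟨Δ, hΔ, hcard⟩ := exists_isBracketingCover_card_le D hδ
  refine ⟨Δ, hΔ.mem_Icc, fun x hx => ?_, hcard.trans ?_⟩
  · obtain ⟨p, hp, hpx, hxp, hgap⟩ := hΔ.exists_bracket x hx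
    refine ⟨p, hp, hpx, hxp, ?_⟩
    rw [volume_anchoredBox_diff (hΔ.mem_Icc p hp).1.1 (hpx.trans hxp)]
    exact ENNReal.ofReal_le_ofReal hgap
  · calc (2 * exp 1) ^ D * (δ⁻¹ + 1) ^ (D + 1)
        ≤ exp 1 * (2 * exp 1) ^ D * (δ⁻¹ + 1) ^ (D + 1) := by
          gcongr
          exact le_mul_of_one_le_left (by positivity) (one_le_exp zero_le_one)
      _ = 1 / 2 * (2 * exp 1) ^ (D + 1) * (δ⁻¹ + 1) ^ (D + 1) := by ring
end

section
/- Let $d \geq 1$, $h \geq 0$, and let $K \subseteq [0,1)^d$ be a finite union of axis-parallel boxes all of whose corner coordinates are of the form $2^{-(h+2+\lceil\log_2 d\rceil)} a$ with $a \in \{0,\ldots,2^{h+2+\lceil\log_2 d\rceil}\}$. Let $x_1$ be uniformly distributed on $[0,1)^d$ and define $x_n = (\langle 2^{n-1} x_{1,i}\rangle)_{i=1,\ldots,d}$, where $\langle\cdot\rangle$ denotes the fractional part. Let $f_K(x) = \mathbf{1}_K(x) - \lambda(K)$. Then for any indices $n_1 < n_2 < \cdots < n_k$ with $n_{l+1}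 - n_l \geq h + 2 + \lceil\log_2 d\rceil$ for all $l$, the random variables $f_K(x_{n_1}),\ldots,f_K(x_{n_k})$ are mutually independent. -/
open MeasureTheory Set ProbabilityTheory

/-!
Write `T_r x = ⟨2^r x⟩` coordinatewise. The set `K` depends only on the first
`m = h + 2 + ⌈log₂ d⌉` binary digits of the coordinates, so it is a union of dyadic cells of
side `2^{-m}`. On each such cell `T_m` is an affine bijection onto the unit cube dividing
volume by `2^{md}`; hence, for Lebesgue measure `λ` on the unit cube,
`λ(K ∩ T_m⁻¹ B) = λ(K) λ(B)` for every measurable `B`, and every `T_r` preserves `λ`.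
Since `T_{r+s} = T_r ∘ T_s`, splitting off the earliest of the `m`-separated times `n_l - 1`
shows inductively that the events `{x_{n_l} ∈ K}` have the intersection probabilities of
independent events, and the `f_K(x_{n_l})` are functions of their indicators.
-/

section Mixing

variable {α ι : Type*} [MeasurableSpace α] {μ : Measure α} [IsProbabilityMeasure μ]
  {T : ℕ → α → α} {A : Set α} {m : ℕ} {p : ι → ℕ}

theorem measure_biInter_preimage_of_mixing [DecidableEq ι]
    (hT_add : ∀ r s, T (r + s) = T r ∘ T s) (hT : ∀ r, MeasurePreserving (T r) μ μ)
    (hA : MeasurableSet A) (hmix : ∀ B, MeasurableSet B → μ (A ∩ T m ⁻¹' B) = μ A * μ B)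
    (hp : Pairwise fun i j => p i + m ≤ p j ∨ p j + m ≤ p i) (s : Finset ι) :
    μ (⋂ i ∈ s, T (p i) ⁻¹' A) = μ A ^ s.card := by
  induction s using Finset.induction_on_min_value p with
  | empty => simp
  | insert a s has hmin ih =>
    set C := ⋂ i ∈ s, T (p i - (p a + m)) ⁻¹' A
    have hC : MeasurableSet C := s.measurableSet_biInter fun i _ => (hT _).measurable hA
    have hsep : ∀ i ∈ s, p a + m ≤ p i := fun i hi => by
      have := hmin i hi
      rcases hp (ne_of_mem_of_not_mem hi has).symm with h | h <;> omega
    have hshift : ⋂ i ∈ s, T (p i) ⁻¹' A = T (p a + m) ⁻¹' C := by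
      simp only [C, preimage_iInter₂]
      refine iInter₂_congr fun i hi => ?_
      rw [← preimage_comp, ← hT_add, Nat.sub_add_cancel (hsep i hi)]
    calc μ (⋂ i ∈ insert a s, T (p i) ⁻¹' A)
        = μ (T (p a) ⁻¹' (A ∩ T m ⁻¹' C)) := by
          rw [Finset.set_biInter_insert, hshift, add_comm, hT_add]; rfl
      _ = μ A * μ C := by
          rw [(hT _).measure_preimage (hA.inter ((hT m).measurable hC)).nullMeasurableSet,
            hmix C hC]
      _ = μ A ^ (insert a s).card := by
          rw [← (hT (p a + m)).measure_preimage hC.nullMeasurableSet, ← hshift, ih,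
            Finset.card_insert_of_notMem has, pow_succ']

theorem iIndepSet_preimage_of_mixing
    (hT_add : ∀ r s, T (r + s) = T r ∘ T s) (hT : ∀ r, MeasurePreserving (T r) μ μ)
    (hA : MeasurableSet A) (hmix : ∀ B, MeasurableSet B → μ (A ∩ T m ⁻¹' B) = μ A * μ B)
    (hp : Pairwise fun i j => p i + m ≤ p j ∨ p j + m ≤ p i) :
    iIndepSet (fun i => T (p i) ⁻¹' A) μ := by
  classical
  rw [iIndepSet_iff_meas_biInter fun i => (hT _).measurable hA]
  intro s
  rw [measure_biInter_preimage_of_mixing hT_add hT hA hmix hp,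
    Finset.prod_congr rfl fun i _ => (hT (p i)).measure_preimage hA.nullMeasurableSet,
    Finset.prod_const]

end Mixing

section Doubling

variable {ι : Type*}

noncomputable def doublingPow (r : ℕ) (x : ι → ℝ) : ι → ℝ :=
  fun i => Int.fract (2 ^ r * x i)

def unitCube (ι : Type*) : Set (ι → ℝ) := univ.pi fun _ => Ico 0 1

noncomputable def dyadicIndex (m : ℕ) (x : ι → ℝ) : ι → ℤ := fun i => ⌊2 ^ m * x i⌋

def dyadicCell (m : ℕ) (c : ι → ℤ) : Set (ι → ℝ) := dyadicIndex m ⁻¹' {c}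

theorem doublingPow_add (r s : ℕ) :
    doublingPow (ι := ι) (r + s) = doublingPow r ∘ doublingPow s := by
  funext x i
  have hshift : (2 : ℝ) ^ r * Int.fract (2 ^ s * x i)
      = 2 ^ (r + s) * x i - ((2 ^ r * ⌊2 ^ s * x i⌋ : ℤ) : ℝ) := by
    rw [Int.fract, pow_add]; push_cast; ring
  simp only [doublingPow, Function.comp_apply]
  rw [hshift, Int.fract_sub_intCast]

theorem measurable_doublingPow (r : ℕ) : Measurable (doublingPow (ι := ι) r) :=
  measurable_pi_lambda _ fun i => ((measurable_pi_apply i).const_mul _).fract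

theorem measurable_dyadicIndex (m : ℕ) : Measurable (dyadicIndex (ι := ι) m) :=
  measurable_pi_lambda _ fun i => ((measurable_pi_apply i).const_mul _).floor

theorem dyadicIndex_eq_iff {m : ℕ} {x : ι → ℝ} {c : ι → ℤ} :
    dyadicIndex m x = c ↔ (2 : ℝ) ^ m • x - (fun i => (c i : ℝ)) ∈ unitCube ι := by
  simp only [funext_iff, dyadicIndex, unitCube, mem_pi, mem_univ, true_implies, mem_Ico,
    Int.floor_eq_iff, Pi.sub_apply, Pi.smul_apply, smul_eq_mul, sub_nonneg, sub_lt_iff_lt_add']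

theorem doublingPow_eq_of_dyadicIndex_eq {m : ℕ} {x : ι → ℝ} {c : ι → ℤ}
    (h : dyadicIndex m x = c) : doublingPow m x = (2 : ℝ) ^ m • x - (fun i => (c i : ℝ)) := by
  subst h
  rfl

theorem preimage_dyadicIndex_pi_Ico (m : ℕ) (a b : ι → ℤ) :
    dyadicIndex m ⁻¹' univ.pi (fun i => Ico (a i) (b i))
      = univ.pi fun i => Ico ((a i : ℝ) / 2 ^ m) (b i / 2 ^ m) := by
  ext x
  simp [dyadicIndex, Int.le_floor, Int.floor_lt, div_le_iff₀', lt_div_iff₀']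

theorem unitCube_eq_preimage_dyadicIndex (m : ℕ) :
    unitCube ι = dyadicIndex m ⁻¹' univ.pi fun _ => Ico 0 (2 ^ m) := by
  simpa [unitCube] using (preimage_dyadicIndex_pi_Ico (ι := ι) m 0 fun _ => 2 ^ m).symm

theorem dyadicCell_inter_preimage_doublingPow (m : ℕ) (c : ι → ℤ) (B : Set (ι → ℝ)) :
    dyadicCell m c ∩ doublingPow m ⁻¹' B
      = (fun x => (2 : ℝ) ^ m • x - (fun i => (c i : ℝ))) ⁻¹' (unitCube ι ∩ B) := by
  ext x
  simp only [dyadicCell, mem_inter_iff, mem_preimage, mem_singleton_iff]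
  rw [← dyadicIndex_eq_iff]
  exact and_congr_right fun hx => by rw [doublingPow_eq_of_dyadicIndex_eq hx]

variable [Fintype ι]

theorem measurableSet_unitCube : MeasurableSet (unitCube ι) :=
  MeasurableSet.univ_pi fun _ => measurableSet_Ico

theorem volume_unitCube : volume (unitCube ι) = 1 := by
  simp [unitCube, Real.volume_pi_Ico]

instance : IsProbabilityMeasure (volume.restrict (unitCube ι)) :=
  ⟨by rw [Measure.restrict_apply_univ, volume_unitCube]⟩

theorem volume_dyadicCell_inter_preimage_doublingPow (m : ℕ) (c : ι → ℤ)
    (B : Set (ι → ℝ)) :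
    volume (dyadicCell m c ∩ doublingPow m ⁻¹' B)
      = volume (dyadicCell m c) * volume.restrict (unitCube ι) B := by
  have hscale : ∀ B : Set (ι → ℝ), volume (dyadicCell m c ∩ doublingPow m ⁻¹' B)
      = ENNReal.ofReal |(((2 : ℝ) ^ m) ^ Fintype.card ι)⁻¹| * volume (unitCube ι ∩ B) := by
    intro B
    rw [dyadicCell_inter_preimage_doublingPow]
    simp only [sub_eq_add_neg]
    change volume ((fun y => (2 : ℝ) ^ m • y) ⁻¹'
      ((fun y => y + -fun i => (c i : ℝ)) ⁻¹' (unitCube ι ∩ B))) = _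
    rw [Measure.addHaar_preimage_smul volume (by positivity), measure_preimage_add_right,
      Module.finrank_fintype_fun_eq_card]
  have hcell := hscale univ
  rw [preimage_univ, inter_univ, inter_univ, volume_unitCube, mul_one] at hcell
  rw [hscale, hcell, Measure.restrict_apply' measurableSet_unitCube, inter_comm]

theorem restrict_unitCube_dyadicCell_inter_preimage_doublingPow (m : ℕ) (c : ι → ℤ)
    (B : Set (ι → ℝ)) :
    volume.restrict (unitCube ι) (dyadicCell m c ∩ doublingPow m ⁻¹' B)
      = volume.restrict (unitCube ι) (dyadicCell m c) * volume.restrict (unitCube ι) B := by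
  by_cases hc : c ∈ univ.pi fun _ => Ico 0 (2 ^ m)
  · have hsub : dyadicCell m c ⊆ unitCube ι := by
      rw [unitCube_eq_preimage_dyadicIndex m]
      exact preimage_mono (singleton_subset_iff.2 hc)
    rw [Measure.restrict_eq_self _ (inter_subset_left.trans hsub),
      Measure.restrict_eq_self _ hsub, volume_dyadicCell_inter_preimage_doublingPow]
  · have hnull : volume.restrict (unitCube ι) (dyadicCell m c) = 0 := by
      rw [Measure.restrict_apply' measurableSet_unitCube, unitCube_eq_preimage_dyadicIndex m,
        dyadicCell, ← preimage_inter, singleton_inter_eq_empty.2 hc, preimage_empty,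
        measure_empty]
    rw [hnull, zero_mul, measure_mono_null inter_subset_left hnull]

theorem restrict_unitCube_preimage_dyadicIndex_inter_preimage_doublingPow
    (m : ℕ) (D : Set (ι → ℤ)) {B : Set (ι → ℝ)} (hB : MeasurableSet B) :
    volume.restrict (unitCube ι) (dyadicIndex m ⁻¹' D ∩ doublingPow m ⁻¹' B)
      = volume.restrict (unitCube ι) (dyadicIndex m ⁻¹' D)
        * volume.restrict (unitCube ι) B := by
  set μ := volume.restrict (unitCube ι)
  have hE : MeasurableSet (doublingPow m ⁻¹' B) := measurable_doublingPow m hB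
  have hcell : ∀ c ∈ D, MeasurableSet (dyadicIndex m ⁻¹' {c}) :=
    fun c _ => measurable_dyadicIndex m (measurableSet_singleton c)
  calc μ (dyadicIndex m ⁻¹' D ∩ doublingPow m ⁻¹' B)
      = μ.restrict (doublingPow m ⁻¹' B) (dyadicIndex m ⁻¹' D) :=
        (Measure.restrict_apply' hE).symm
    _ = ∑' c : D, μ.restrict (doublingPow m ⁻¹' B) (dyadicCell m c) :=
        (tsum_measure_preimage_singleton D.to_countable hcell).symm
    _ = ∑' c : D, μ (dyadicCell m c) * μ B := tsum_congr fun c => by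
        rw [Measure.restrict_apply' hE]
        exact restrict_unitCube_dyadicCell_inter_preimage_doublingPow m c B
    _ = μ (dyadicIndex m ⁻¹' D) * μ B := by
        rw [ENNReal.tsum_mul_right]
        exact congrArg (· * μ B) (tsum_measure_preimage_singleton D.to_countable hcell)

theorem measurePreserving_doublingPow (m : ℕ) :
    MeasurePreserving (doublingPow m) (volume.restrict (unitCube ι))
      (volume.restrict (unitCube ι)) := by
  refine ⟨measurable_doublingPow m, Measure.ext fun B hB => ?_⟩
  have hmix := restrict_unitCube_preimage_dyadicIndex_inter_preimage_doublingPow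
    m (univ.pi fun _ => Ico 0 (2 ^ m)) hB
  have hconull : volume.restrict (unitCube ι) (unitCube ι)ᶜ = 0 := by
    rw [Measure.restrict_apply' measurableSet_unitCube, compl_inter_self, measure_empty]
  rw [← unitCube_eq_preimage_dyadicIndex, Measure.restrict_apply_self, volume_unitCube, one_mul,
    inter_comm, measure_inter_conull hconull] at hmix
  rw [Measure.map_apply (measurable_doublingPow m) hB, hmix]

end Doubling

theorem doubling_indicators_indep_general (d : ℕ) (h : ℕ)
    (K : Set (Fin d → ℝ)) (S : Finset ((Fin d → ℕ) × (Fin d → ℕ)))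
    (hK : K = ⋃ p ∈ S, Set.pi Set.univ fun i =>
        Set.Ico ((p.1 i : ℝ) / 2^(h + 2 + Nat.clog 2 d)) ((p.2 i : ℝ) / 2^(h + 2 + Nat.clog 2 d)))
    (k : ℕ) (n : Fin k → ℕ) (hn1 : ∀ l, 1 ≤ n l)
    (hgap : ∀ l l' : Fin k, l < l' → n l + (h + 2 + Nat.clog 2 d) ≤ n l') :
    iIndepFun
      (fun l (ω : Fin d → ℝ) =>
        K.indicator (fun _ => (1:ℝ)) (fun i => Int.fract (2^(n l - 1) * ω i))
          - (volume K).toReal)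
      (volume.restrict (Set.pi Set.univ fun _ : Fin d => Set.Ico (0:ℝ) 1)) := by
  set m := h + 2 + Nat.clog 2 d
  obtain ⟨D, rfl⟩ : ∃ D : Set (Fin d → ℤ), K = dyadicIndex m ⁻¹' D :=
    ⟨⋃ p ∈ S, univ.pi fun i => Ico (p.1 i : ℤ) (p.2 i), by
      simp [hK, preimage_dyadicIndex_pi_Ico]⟩
  have hsep : Pairwise fun l l' => n l - 1 + m ≤ n l' - 1 ∨ n l' - 1 + m ≤ n l - 1 := by
    intro l l' hne
    have := hn1 l
    have := hn1 l'
    rcases hne.lt_or_gt with hlt | hlt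
    · have := hgap l l' hlt; omega
    · have := hgap l' l hlt; omega
  have hind : iIndepSet (fun l => doublingPow (n l - 1) ⁻¹' (dyadicIndex m ⁻¹' D))
      (volume.restrict (unitCube (Fin d))) :=
    iIndepSet_preimage_of_mixing doublingPow_add measurePreserving_doublingPow
      (measurable_dyadicIndex m D.to_countable.measurableSet)
      (fun _ => restrict_unitCube_preimage_dyadicIndex_inter_preimage_doublingPow m D) hsep
  exact hind.iIndepFun_indicator.comp (fun _ x => x - _)
    fun _ => measurable_id.sub measurable_const

/-- Independence of `f_K(x_{n_1}), …, f_K(x_{n_k})` for the coordinatewise doubling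
orbit of a uniform point, where `K` is a finite union of dyadic boxes of resolution
`2^{-(h+2+⌈log₂ d⌉)}` and the indices are separated by at least `h+2+⌈log₂ d⌉`. -/
theorem doubling_indicators_indep (d : ℕ) (hd : 1 ≤ d) (h : ℕ)
    (K : Set (Fin d → ℝ)) (S : Finset ((Fin d → ℕ) × (Fin d → ℕ)))
    (hS : ∀ p ∈ S, ∀ i, p.1 i ≤ 2^(h + 2 + Nat.clog 2 d) ∧ p.2 i ≤ 2^(h + 2 + Nat.clog 2 d))
    (hK : K = ⋃ p ∈ S, Set.pi Set.univ fun i =>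
        Set.Ico ((p.1 i : ℝ) / 2^(h + 2 + Nat.clog 2 d)) ((p.2 i : ℝ) / 2^(h + 2 + Nat.clog 2 d)))
    (k : ℕ) (n : Fin k → ℕ) (hn1 : ∀ l, 1 ≤ n l) (hmono : StrictMono n)
    (hgap : ∀ l l' : Fin k, l < l' → n l + (h + 2 + Nat.clog 2 d) ≤ n l') :
    iIndepFun
      (fun l (ω : Fin d → ℝ) =>
        K.indicator (fun _ => (1:ℝ)) (fun i => Int.fract (2^(n l - 1) * ω i))
          - (volume K).toReal)
      (volume.restrict (Set.pi Set.univ fun _ : Fin d => Set.Ico (0:ℝ) 1)) :=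
  doubling_indicators_indep_general d h K S hK k n hn1 hgap
end
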